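/- Let (V, b) be a symplectic vector space of dimension 2ℓ (ℓ ≥ 1) over an algebraically closed field K of characteristic 2, and let e ∈ sp(V) be nilpotent such that V = W ⊕ Z where W and Z are totally singular e-invariant subspaces on each of which e acts with a single Jordan block of size ℓ. Let ẽ be the map induced by e on S²(V), let φ : S²(V) → K be determined by φ(xy) = b(x, y), and set α = ν₂(ℓ). Then ker(ẽ^{2^α − 1}) ⊆ ker φ, and ker(ẽ^{2^α}) ⊄ ker φ. -/

import Mathlib

/-!
Write `q = 2 ^ α` and `ℓ = q * m` with `m` odd. In characteristic two the binomial coefficients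
`C(q - 1, k)` are all odd and `C(q, k)` is even for `0 < k < q`, so
`ẽ^(q-1) (x y) = ∑_{k < q} (e^k x) (e^(q-1-k) y)` and `ẽ^q` is the map induced by `e^q`.

For the inclusion, `φ` factors through `ẽ^(q-1)`. Since `q` divides the size `ℓ` of the Jordan
block on `Z`, some `P` satisfies `∑_{k < q} e^k P e^(q-1-k) = π`, the projection onto `Z` along
`W`; then `ψ (x y) = b x (P y) + b (P x) y` is well defined on `S²(V)` and
`ψ (ẽ^(q-1) (x y)) = b x (π y) + b (π x) y = b x y`, because `W` and `Z` are totally singular.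

For the non-inclusion, let `x₀ ∈ W` and `y₀ ∈ Z` generate the two blocks and put `f = e^q`,
`x = e^(q-1) x₀`, so that `f^m` kills `x` and `y₀`. The element
`u = ∑_{s < m} (f^(m-1-s) x) (f^s y₀)` is killed by `ẽ^q` (the sum telescopes), while
`φ u = m • b (e^(ℓ-1) x₀) y₀`, which is nonzero as `m` is odd and `b` is nondegenerate.
-/

open scoped TensorProduct

/-- The symmetric square `S²(V)`: the quotient of `V ⊗ V` by the span of all
`x ⊗ y - y ⊗ x`. -/
noncomputable abbrev SymSq (K V : Type*) [Field K] [AddCommGroup V] [Module K V] : Type _ :=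
  TensorProduct K V V ⧸
    Submodule.span K {z : TensorProduct K V V | ∃ x y : V, z = x ⊗ₜ[K] y - y ⊗ₜ[K] x}

/-- The product `xy` in the symmetric square, i.e. the image of `x ⊗ y`. -/
noncomputable def SymSq.mul {K V : Type*} [Field K] [AddCommGroup V] [Module K V]
    (x y : V) : SymSq K V :=
  Submodule.Quotient.mk (x ⊗ₜ[K] y)

theorem Nat.cast_choose_two_pow_sub_one {R : Type*} [Ring R] [CharP R 2] {a k : ℕ}
    (hk : k < 2 ^ a) : ((2 ^ a - 1).choose k : R) = 1 := by
  induction k with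
  | zero => simp
  | succ k ih =>
    have hpascal : ((2 ^ a).choose (k + 1) : R) =
        (2 ^ a - 1).choose k + (2 ^ a - 1).choose (k + 1) := by
      rw [← Nat.cast_add, ← Nat.choose_succ_succ', Nat.sub_add_cancel Nat.one_le_two_pow]
    have hdvd : 2 ∣ (2 ^ a).choose (k + 1) := Nat.prime_two.dvd_choose_pow (by omega) hk.ne
    rw [(CharP.cast_eq_zero_iff R 2 _).2 hdvd, ih (by omega), eq_comm,
      CharTwo.add_eq_zero] at hpascal
    exact hpascal.symm

namespace Module.End

theorem linearIndependent_pow_apply {K M : Type*} [DivisionRing K] [AddCommGroup M]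
    [Module K M] {f : Module.End K M} {x : M} {n : ℕ} (hx : (f ^ n) x = 0)
    (hx' : (f ^ (n - 1)) x ≠ 0) : LinearIndependent K fun i : Fin n => (f ^ (i : ℕ)) x := by
  rw [Fintype.linearIndependent_iff]
  intro g hg
  suffices ∀ j, ∀ i : Fin n, (i : ℕ) < j → g i = 0 from fun i => this _ i i.val.lt_succ_self
  intro j
  induction j with
  | zero => intro i hi; omega
  | succ j ih =>
    intro i hi
    rcases Nat.lt_succ_iff_lt_or_eq.1 hi with hi | rfl
    · exact ih i hi
    have hi' := congrArg (f ^ (n - 1 - i)) hg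
    rw [map_sum, map_zero, Finset.sum_eq_single i] at hi'
    · rw [map_smul, ← mul_apply, ← pow_add, Nat.sub_add_cancel (by omega)] at hi'
      exact (smul_eq_zero.1 hi').resolve_right hx'
    · intro i' _ hne
      rcases lt_or_gt_of_ne (Fin.val_ne_of_ne hne) with h | h
      · rw [ih i' h, zero_smul, map_zero]
      · rw [map_smul, ← mul_apply, ← pow_add, pow_map_zero_of_le (by omega) hx, smul_zero]
    · simp

theorem exists_sum_pow_mul_mul_pow_eq_one {R M : Type*} [CommRing R] [AddCommGroup M]
    [Module R M] {f : Module.End R M} {y : M} {ℓ q : ℕ} (β : Module.Basis (Fin ℓ) R M)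
    (hβ : ∀ i, β i = (f ^ (i : ℕ)) y) (hy : (f ^ ℓ) y = 0) (hq : q ∣ ℓ) :
    ∃ P : Module.End R M, ∑ k ∈ Finset.range q, f ^ k * P * f ^ (q - 1 - k) = 1 := by
  set P := β.constr R fun i => if q ∣ (i : ℕ) + 1 then (f ^ ((i : ℕ) + 1 - q)) y else 0
  have hP : ∀ N, P ((f ^ N) y) = if q ∣ N + 1 then (f ^ (N + 1 - q)) y else 0 := by
    intro N
    rcases lt_or_ge N ℓ with hN | hN
    · rw [← hβ ⟨N, hN⟩, β.constr_basis]
    · -- past the chain both sides vanish: `q ∣ ℓ` and `q ∣ N + 1 > ℓ` give `N + 1 - q ≥ ℓ`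
      rw [pow_map_zero_of_le hN hy, map_zero]
      split_ifs with hdvd
      · obtain ⟨c, hc⟩ := hdvd
        obtain ⟨d, rfl⟩ := hq
        have hdc : d + 1 ≤ c := Nat.lt_of_mul_lt_mul_left (a := q) (by omega)
        have hle := Nat.mul_le_mul_left q hdc
        rw [Nat.mul_succ] at hle
        exact (pow_map_zero_of_le (by omega) hy).symm
      · rfl
  refine ⟨P, β.ext fun n => ?_⟩
  have hq0 : 0 < q := Nat.pos_of_dvd_of_pos hq n.pos
  have hterm : ∀ k ∈ Finset.range q, (f ^ k * P * f ^ (q - 1 - k)) ((f ^ (n : ℕ)) y) =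
      if k = n % q then (f ^ (n : ℕ)) y else 0 := by
    intro k hk
    have hk := Finset.mem_range.1 hk
    have hdvd : q ∣ n + q - k ↔ k = n % q := by
      rw [← Nat.modEq_iff_dvd' (by omega), Nat.ModEq, Nat.add_mod_right, Nat.mod_eq_of_lt hk]
    rw [mul_apply, mul_apply, ← mul_apply (f ^ (q - 1 - k)), ← pow_add, hP,
      show q - 1 - k + n + 1 = n + q - k by omega]
    split_ifs with h1 h2 h2
    · rw [← mul_apply, ← pow_add, show k + (n + q - k - q) = n by
        have := Nat.mod_le n q; omega]
    · exact absurd (hdvd.1 h1) h2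
    · exact absurd (hdvd.2 h2) h1
    · exact map_zero _
  rw [hβ, LinearMap.sum_apply, Finset.sum_congr rfl hterm, Finset.sum_ite_eq',
    if_pos (Finset.mem_range.2 (Nat.mod_lt _ hq0)), one_apply]

theorem coe_pow_restrict_apply {R V : Type*} [CommRing R] [AddCommGroup V]
    [Module R V] {e : Module.End R V} {Z : Submodule R V} (hZ : ∀ x ∈ Z, e x ∈ Z) (n : ℕ)
    (z : Z) : ((e.restrict hZ ^ n) z : V) = (e ^ n) z := by
  rw [Module.End.pow_restrict]
  rfl

theorem exists_basis_restrict_pow_apply {K V : Type*} [Field K] [AddCommGroup V]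
    [Module K V] {e : Module.End K V} {Z : Submodule K V} (hZ : ∀ x ∈ Z, e x ∈ Z) {ℓ : ℕ}
    (hdim : Module.finrank K Z = ℓ) {y : V} (hy : y ∈ Z) (h0 : (e ^ ℓ) y = 0)
    (h1 : (e ^ (ℓ - 1)) y ≠ 0) :
    ∃ β : Module.Basis (Fin ℓ) K Z, ∀ i, β i = (e.restrict hZ ^ (i : ℕ)) ⟨y, hy⟩ := by
  have : Nonempty (Fin ℓ) := Fin.pos_iff_nonempty.1 <| Nat.pos_of_ne_zero <| by
    rintro rfl
    exact h1 h0
  have hli := Module.End.linearIndependent_pow_apply (f := e.restrict hZ) (x := ⟨y, hy⟩)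
    (Subtype.ext (by rw [coe_pow_restrict_apply, h0]; rfl))
    (fun h => h1 (by simpa [coe_pow_restrict_apply] using congrArg Subtype.val h))
  exact ⟨basisOfLinearIndependentOfCardEqFinrank hli (by simp [hdim]), fun i => by simp⟩

theorem le_span_range_pow_apply {R V : Type*} [CommRing R] [AddCommGroup V] [Module R V]
    {e : Module.End R V} {Z : Submodule R V} (hZ : ∀ x ∈ Z, e x ∈ Z) {ℓ : ℕ} {y : V}
    (hy : y ∈ Z) (β : Module.Basis (Fin ℓ) R Z)
    (hβ : ∀ i, β i = (e.restrict hZ ^ (i : ℕ)) ⟨y, hy⟩) :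
    Z ≤ Submodule.span R (Set.range fun n : ℕ => (e ^ n) y) := fun z hz => by
  rw [show z = ((⟨z, hz⟩ : Z) : V) from rfl, ← β.sum_repr ⟨z, hz⟩, Submodule.coe_sum]
  refine Submodule.sum_mem _ fun i _ => ?_
  rw [Submodule.coe_smul, hβ, coe_pow_restrict_apply]
  exact Submodule.smul_mem _ _ (Submodule.subset_span ⟨i, rfl⟩)

end Module.End

section Complement

variable {R V : Type*} [CommRing R] [AddCommGroup V] [Module R V] {W Z : Submodule R V}

theorem Module.End.exists_sum_pow_mul_mul_pow_eq_projection {e : Module.End R V}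
    (hWZ : IsCompl W Z) (hW : ∀ x ∈ W, e x ∈ W) (hZ : ∀ x ∈ Z, e x ∈ Z) {q : ℕ}
    {PZ : Module.End R Z}
    (hPZ : ∑ k ∈ Finset.range q, e.restrict hZ ^ k * PZ * e.restrict hZ ^ (q - 1 - k) = 1) :
    ∃ P : Module.End R V,
      ∑ k ∈ Finset.range q, e ^ k * P * e ^ (q - 1 - k) = Z.projection W hWZ.symm := by
  set f := e.restrict hZ
  set ρ := Z.projectionOnto W hWZ.symm
  have hι (k : ℕ) : (e ^ k) ∘ₗ Z.subtype = Z.subtype ∘ₗ (f ^ k) :=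
    Module.End.commute_pow_left_of_commute (LinearMap.subtype_comp_restrict hZ).symm k
  have hρ (k : ℕ) : (f ^ k) ∘ₗ ρ = ρ ∘ₗ (e ^ k) := by
    refine Module.End.commute_pow_left_of_commute (LinearMap.ext fun v => ?_) k
    obtain ⟨w, z, rfl, -⟩ := Submodule.existsUnique_add_of_isCompl hWZ v
    simp [ρ, f, Submodule.projectionOnto_apply_of_mem_right, hW, LinearMap.restrict_apply,
      Submodule.projectionOnto_apply_of_mem_left _ (hZ _ z.2)]
  refine ⟨Z.subtype ∘ₗ PZ ∘ₗ ρ, ?_⟩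
  calc ∑ k ∈ Finset.range q, e ^ k * (Z.subtype ∘ₗ PZ ∘ₗ ρ) * e ^ (q - 1 - k)
      = ∑ k ∈ Finset.range q, Z.subtype ∘ₗ (f ^ k * PZ * f ^ (q - 1 - k)) ∘ₗ ρ := by
        refine Finset.sum_congr rfl fun k _ => ?_
        simp only [Module.End.mul_eq_comp, ← LinearMap.comp_assoc, hι]
        simp only [LinearMap.comp_assoc, hρ]
    _ = Z.subtype ∘ₗ ρ := LinearMap.ext fun v => by
        simp only [LinearMap.sum_apply, LinearMap.comp_apply]
        rw [← map_sum, ← LinearMap.sum_apply, hPZ, Module.End.one_apply]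

theorem LinearMap.apply_projection_add_projection_apply {M : Type*} [AddCommGroup M]
    [Module R M] (b : V →ₗ[R] V →ₗ[R] M) (hWZ : IsCompl W Z)
    (hW : ∀ x ∈ W, ∀ y ∈ W, b x y = 0) (hZ : ∀ x ∈ Z, ∀ y ∈ Z, b x y = 0)
    (x y : V) :
    b x (Z.projection W hWZ.symm y) + b (Z.projection W hWZ.symm x) y = b x y := by
  obtain ⟨xw, xz, rfl, -⟩ := Submodule.existsUnique_add_of_isCompl hWZ x
  obtain ⟨yw, yz, rfl, -⟩ := Submodule.existsUnique_add_of_isCompl hWZ y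
  simp only [map_add, Submodule.projection_apply_of_mem_right hWZ.symm xw.2,
    Submodule.projection_apply_of_mem_right hWZ.symm yw.2, Submodule.projection_apply_left,
    LinearMap.add_apply, hW _ xw.2 _ yw.2, hZ _ xz.2 _ yz.2, map_zero, LinearMap.zero_apply]
  abel

end Complement

theorem LinearMap.IsAdjointPair.pow {R M N : Type*} [CommSemiring R] [AddCommMonoid M]
    [Module R M] [AddCommMonoid N] [Module R N] {B : M →ₗ[R] M →ₗ[R] N} {f : Module.End R M}
    (h : B.IsAdjointPair B f f) (n : ℕ) : B.IsAdjointPair B ⇑(f ^ n) ⇑(f ^ n) := by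
  induction n with
  | zero => exact LinearMap.isAdjointPair_one
  | succ n ih =>
    have := ih.mul h
    rwa [← pow_succ, ← pow_succ'] at this

theorem LinearMap.apply_pow_sub_one_apply_ne_zero {R V : Type*} [CommRing R] [AddCommGroup V]
    [Module R V] {b : V →ₗ[R] V →ₗ[R] R} (hnd : ∀ v, (∀ w, b v w = 0) → v = 0)
    {e : Module.End R V} (he : b.IsAdjointPair b e e) {W Z : Submodule R V} (hWZ : W ⊔ Z = ⊤)
    (hW : ∀ x ∈ W, ∀ y ∈ W, b x y = 0) (hWe : ∀ x ∈ W, e x ∈ W) {ℓ : ℕ} {x y : V}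
    (hx : x ∈ W) (h0 : (e ^ ℓ) x = 0) (h1 : (e ^ (ℓ - 1)) x ≠ 0)
    (hZ : Z ≤ Submodule.span R (Set.range fun n : ℕ => (e ^ n) y)) :
    b ((e ^ (ℓ - 1)) x) y ≠ 0 := by
  intro hxy
  refine h1 (hnd _ fun w => ?_)
  have hW' : W ≤ LinearMap.ker (b ((e ^ (ℓ - 1)) x)) := fun w hw =>
    hW _ (Module.End.pow_apply_mem_of_forall_mem _ hWe _ hx) _ hw
  have hZ' : Z ≤ LinearMap.ker (b ((e ^ (ℓ - 1)) x)) := by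
    refine hZ.trans (Submodule.span_le.2 ?_)
    rintro _ ⟨n, rfl⟩
    rw [SetLike.mem_coe, LinearMap.mem_ker, ← he.pow n, ← Module.End.mul_apply, ← pow_add]
    rcases n with _ | n
    · simpa using hxy
    · rw [Module.End.pow_map_zero_of_le (by omega) h0, map_zero, LinearMap.zero_apply]
  exact sup_le hW' hZ' (hWZ ▸ Submodule.mem_top : w ∈ W ⊔ Z)

namespace SymSq

variable {K V M : Type*} [Field K] [AddCommGroup V] [Module K V] [AddCommGroup M] [Module K M]

@[simp]
theorem zero_mul (y : V) : mul (K := K) 0 y = 0 := by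
  simp [mul]

@[simp]
theorem mul_zero (x : V) : mul (K := K) x 0 = 0 := by
  simp [mul]

theorem linearMap_ext {f g : SymSq K V →ₗ[K] M} (h : ∀ x y, f (mul x y) = g (mul x y)) :
    f = g :=
  Submodule.linearMap_qext _ (TensorProduct.ext' h)

def lift (B : V →ₗ[K] V →ₗ[K] M) (hB : ∀ x y, B x y = B y x) : SymSq K V →ₗ[K] M :=
  Submodule.liftQ _ (TensorProduct.lift B) <| Submodule.span_le.2 <| by
    rintro _ ⟨x, y, rfl⟩
    simp [hB x y]

@[simp]
theorem lift_mul (B : V →ₗ[K] V →ₗ[K] M) (hB : ∀ x y, B x y = B y x) (x y : V) :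
    lift B hB (mul x y) = B x y :=
  TensorProduct.lift.tmul x y

variable {e : Module.End K V} {et : Module.End K (SymSq K V)}

theorem pow_apply_mul (het : ∀ x y, et (mul x y) = mul (e x) y + mul x (e y)) (n : ℕ)
    (x y : V) : (et ^ n) (mul x y) =
      ∑ k ∈ Finset.range (n + 1), n.choose k • mul ((e ^ k) x) ((e ^ (n - k)) y) := by
  set D := LinearMap.rTensor V e + LinearMap.lTensor V e
  have hD : et ∘ₗ Submodule.mkQ _ = Submodule.mkQ _ ∘ₗ D :=
    TensorProduct.ext' fun x y => by
      simp only [LinearMap.comp_apply, Submodule.mkQ_apply, D, LinearMap.add_apply,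
        LinearMap.rTensor_tmul, LinearMap.lTensor_tmul, map_add]
      exact het x y
  have hcomm : Commute (LinearMap.rTensor V e) (LinearMap.lTensor V e) := by
    rw [commute_iff_eq, Module.End.mul_eq_comp, Module.End.mul_eq_comp,
      LinearMap.rTensor_comp_lTensor, LinearMap.lTensor_comp_rTensor]
  have hpow := LinearMap.congr_fun (Module.End.commute_pow_left_of_commute hD n) (x ⊗ₜ y)
  simp only [LinearMap.comp_apply, Submodule.mkQ_apply] at hpow
  rw [mul, hpow, hcomm.add_pow, LinearMap.sum_apply, ← Submodule.mkQ_apply, map_sum]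
  refine Finset.sum_congr rfl fun k _ => ?_
  simp [LinearMap.rTensor_pow, LinearMap.lTensor_pow, mul]

variable [CharP K 2]

theorem pow_two_pow_apply_mul (het : ∀ x y, et (mul x y) = mul (e x) y + mul x (e y))
    (a : ℕ) (x y : V) :
    (et ^ 2 ^ a) (mul x y) = mul ((e ^ 2 ^ a) x) y + mul x ((e ^ 2 ^ a) y) := by
  obtain ⟨n, hn⟩ : ∃ n, 2 ^ a = n + 1 :=
    ⟨2 ^ a - 1, (Nat.sub_add_cancel Nat.one_le_two_pow).symm⟩
  rw [pow_apply_mul het, hn, Finset.sum_range_succ, Finset.sum_range_succ', Finset.sum_eq_zero]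
  · simp [add_comm]
  intro k hk
  have hdvd : 2 ∣ (n + 1).choose (k + 1) :=
    hn ▸ Nat.prime_two.dvd_choose_pow (by omega) (by simp at hk; omega)
  rw [← Nat.cast_smul_eq_nsmul K, (CharP.cast_eq_zero_iff K 2 _).2 hdvd, zero_smul]

theorem pow_two_pow_sub_one_apply_mul
    (het : ∀ x y, et (mul x y) = mul (e x) y + mul x (e y)) (a : ℕ) (x y : V) :
    (et ^ (2 ^ a - 1)) (mul x y) =
      ∑ k ∈ Finset.range (2 ^ a), mul ((e ^ k) x) ((e ^ (2 ^ a - 1 - k)) y) := by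
  rw [pow_apply_mul het, Nat.sub_add_cancel Nat.one_le_two_pow]
  refine Finset.sum_congr rfl fun k hk => ?_
  rw [← Nat.cast_smul_eq_nsmul K, Nat.cast_choose_two_pow_sub_one (Finset.mem_range.1 hk),
    one_smul]

variable {b : V →ₗ[K] V →ₗ[K] K} {φ : SymSq K V →ₗ[K] K}

theorem ker_pow_two_pow_sub_one_le_ker (hb : ∀ x y, b x y = b y x)
    (he : b.IsAdjointPair b e e) (het : ∀ x y, et (mul x y) = mul (e x) y + mul x (e y))
    (hφ : ∀ x y, φ (mul x y) = b x y) (a : ℕ) {P π : Module.End K V}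
    (hP : ∑ k ∈ Finset.range (2 ^ a), e ^ k * P * e ^ (2 ^ a - 1 - k) = π)
    (hπ : ∀ x y, b x (π y) + b (π x) y = b x y) :
    LinearMap.ker (et ^ (2 ^ a - 1)) ≤ LinearMap.ker φ := by
  set q := 2 ^ a
  let B : V →ₗ[K] V →ₗ[K] K := b.compl₂ P + b ∘ₗ P
  have hB (x y : V) : B x y = B y x := by
    simp only [B, LinearMap.add_apply, LinearMap.compl₂_apply, LinearMap.comp_apply, hb x,
      hb (P x), add_comm]
  have hreflect (x y : V) : ∑ k ∈ Finset.range q, b ((e ^ (q - 1 - k) * P * e ^ k) x) y =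
      ∑ k ∈ Finset.range q, b ((e ^ k * P * e ^ (q - 1 - k)) x) y := by
    rw [← Finset.sum_range_reflect]
    refine Finset.sum_congr rfl fun k hk => ?_
    rw [Nat.sub_sub_self (by simp at hk; omega)]
  have hφ' : φ = lift B hB ∘ₗ et ^ (q - 1) := linearMap_ext fun x y => by
    calc φ (mul x y) = b x (π y) + b (π x) y := (hφ x y).trans (hπ x y).symm
      _ = ∑ k ∈ Finset.range q, (b x ((e ^ k * P * e ^ (q - 1 - k)) y) +
            b ((e ^ (q - 1 - k) * P * e ^ k) x) y) := by
        rw [Finset.sum_add_distrib, hreflect, ← hP, LinearMap.sum_apply, LinearMap.sum_apply,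
          map_sum, map_sum, LinearMap.sum_apply]
      _ = ∑ k ∈ Finset.range q, B ((e ^ k) x) ((e ^ (q - 1 - k)) y) := by
        refine Finset.sum_congr rfl fun k _ => ?_
        simp only [B, LinearMap.add_apply, LinearMap.compl₂_apply, LinearMap.comp_apply,
          Module.End.mul_apply, he.pow k x, ← he.pow (q - 1 - k) _ y]
      _ = (lift B hB ∘ₗ et ^ (q - 1)) (mul x y) := by
        rw [LinearMap.comp_apply, pow_two_pow_sub_one_apply_mul het, map_sum]
        simp only [lift_mul]
        rfl
  rw [hφ']
  exact LinearMap.ker_le_ker_comp _ _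

theorem not_ker_le_ker_of_odd (he : b.IsAdjointPair b e e)
    (het : ∀ x y, et (mul x y) = mul (e x) y + mul x (e y))
    (hφ : ∀ x y, φ (mul x y) = b x y) {m : ℕ} (hm : Odd m) {x y : V} (hx : (e ^ m) x = 0)
    (hy : (e ^ m) y = 0) (hxy : b ((e ^ (m - 1)) x) y ≠ 0) :
    ¬ LinearMap.ker et ≤ LinearMap.ker φ := by
  set u : SymSq K V := ∑ s ∈ Finset.range m, mul ((e ^ (m - 1 - s)) x) ((e ^ s) y)
  have hu : et u = 0 := by
    set G : ℕ → SymSq K V := fun s => mul ((e ^ (m - s)) x) ((e ^ s) y)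
    have hterm : ∀ s ∈ Finset.range m,
        et (mul ((e ^ (m - 1 - s)) x) ((e ^ s) y)) = G s - G (s + 1) := by
      intro s hs
      have hs := Finset.mem_range.1 hs
      rw [het, sub_eq_add_neg, ← neg_one_smul K, CharTwo.neg_eq, one_smul,
        ← Module.End.mul_apply e, ← pow_succ', ← Module.End.mul_apply e, ← pow_succ',
        show m - 1 - s + 1 = m - s by omega, show m - 1 - s = m - (s + 1) by omega]
    rw [map_sum, Finset.sum_congr rfl hterm, Finset.sum_range_sub']
    simp [G, hx, hy]
  have hφu : φ u = b ((e ^ (m - 1)) x) y := by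
    have hterm : ∀ s ∈ Finset.range m,
        φ (mul ((e ^ (m - 1 - s)) x) ((e ^ s) y)) = b ((e ^ (m - 1)) x) y := by
      intro s hs
      have hs := Finset.mem_range.1 hs
      rw [hφ, ← he.pow s, ← Module.End.mul_apply, ← pow_add, show s + (m - 1 - s) = m - 1 by
        omega]
    rw [map_sum, Finset.sum_congr rfl hterm, Finset.sum_const, Finset.card_range,
      ← Nat.cast_smul_eq_nsmul K, CharTwo.natCast_eq_mod, Nat.odd_iff.1 hm, Nat.cast_one,
      one_smul]
  exact fun h => hxy (hφu ▸ h hu)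

theorem not_ker_pow_two_pow_le_ker (he : b.IsAdjointPair b e e)
    (het : ∀ x y, et (mul x y) = mul (e x) y + mul x (e y))
    (hφ : ∀ x y, φ (mul x y) = b x y) (a : ℕ) {m : ℕ} (hm : Odd m) {x y : V}
    (hx : (e ^ (2 ^ a * m)) x = 0) (hy : (e ^ (2 ^ a * m)) y = 0)
    (hxy : b ((e ^ (2 ^ a * m - 1)) x) y ≠ 0) :
    ¬ LinearMap.ker (et ^ 2 ^ a) ≤ LinearMap.ker φ := by
  have hq : 1 ≤ 2 ^ a := Nat.one_le_two_pow
  have hqm : 2 ^ a ≤ 2 ^ a * m := Nat.le_mul_of_pos_right _ hm.pos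
  refine not_ker_le_ker_of_odd (he.pow _) (pow_two_pow_apply_mul het a) hφ hm
    (x := (e ^ (2 ^ a - 1)) x) ?_ (by rwa [← pow_mul]) ?_
  · rw [← pow_mul, ← Module.End.mul_apply, ← pow_add]
    exact Module.End.pow_map_zero_of_le (by omega) hx
  · rwa [← Module.End.mul_apply, ← pow_mul, ← pow_add, Nat.mul_sub_one,
      show 2 ^ a * m - 2 ^ a + (2 ^ a - 1) = 2 ^ a * m - 1 by omega]

end SymSq

theorem stmt13_general (K : Type*) [Field K] [CharP K 2]
    (V : Type*) [AddCommGroup V] [Module K V]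
    (ℓ : ℕ) (hl : 1 ≤ ℓ)
    (b : V →ₗ[K] V →ₗ[K] K)
    (halt : ∀ v : V, b v v = 0)
    (hnd : ∀ v : V, (∀ w : V, b v w = 0) → v = 0)
    (e : Module.End K V)
    (hsp : ∀ v w : V, b (e v) w + b v (e w) = 0)
    (W Z : Submodule K V) (hcompl : IsCompl W Z)
    (hWsing : ∀ x ∈ W, ∀ y ∈ W, b x y = 0)
    (hZsing : ∀ x ∈ Z, ∀ y ∈ Z, b x y = 0)
    (hWinv : ∀ x ∈ W, e x ∈ W) (hZinv : ∀ x ∈ Z, e x ∈ Z)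
    (hZdim : Module.finrank K ↥Z = ℓ)
    (hW1 : ∃ x ∈ W, (e ^ (ℓ - 1)) x ≠ 0)
    (hW2 : ∀ x ∈ W, (e ^ ℓ) x = 0)
    (hZ1 : ∃ x ∈ Z, (e ^ (ℓ - 1)) x ≠ 0)
    (hZ2 : ∀ x ∈ Z, (e ^ ℓ) x = 0)
    (et : Module.End K (SymSq K V))
    (het : ∀ x y : V, et (SymSq.mul x y) = SymSq.mul (e x) y + SymSq.mul x (e y))
    (φ : SymSq K V →ₗ[K] K)
    (hφ : ∀ x y : V, φ (SymSq.mul x y) = b x y) :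
    LinearMap.ker (et ^ (2 ^ padicValNat 2 ℓ - 1)) ≤ LinearMap.ker φ ∧
      ¬ LinearMap.ker (et ^ (2 ^ padicValNat 2 ℓ)) ≤ LinearMap.ker φ := by
  have hb (x y : V) : b x y = b y x := by rw [← LinearMap.IsAlt.neg halt, CharTwo.neg_eq]
  have he : b.IsAdjointPair b e e := fun x y => CharTwo.add_eq_zero.1 (hsp x y)
  obtain ⟨x₀, hx₀W, hx₀⟩ := hW1
  obtain ⟨y₀, hy₀Z, hy₀⟩ := hZ1
  obtain ⟨β, hβ⟩ :=
    Module.End.exists_basis_restrict_pow_apply hZinv hZdim hy₀Z (hZ2 _ hy₀Z) hy₀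
  obtain ⟨a, m, hm, rfl⟩ := Nat.exists_eq_two_pow_mul_odd (Nat.one_le_iff_ne_zero.1 hl)
  rw [padicValNat.mul (by positivity) hm.pos.ne', padicValNat.prime_pow,
    padicValNat.eq_zero_of_not_dvd hm.not_two_dvd_nat, add_zero]
  constructor
  · obtain ⟨PZ, hPZ⟩ := Module.End.exists_sum_pow_mul_mul_pow_eq_one β hβ
      (Subtype.ext (by rw [Module.End.coe_pow_restrict_apply, hZ2 _ hy₀Z]; rfl))
      (dvd_mul_right _ _)
    obtain ⟨P, hP⟩ :=
      Module.End.exists_sum_pow_mul_mul_pow_eq_projection hcompl hWinv hZinv hPZ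
    exact SymSq.ker_pow_two_pow_sub_one_le_ker hb he het hφ a hP
      (b.apply_projection_add_projection_apply hcompl hWsing hZsing)
  · exact SymSq.not_ker_pow_two_pow_le_ker he het hφ a hm (hW2 _ hx₀W) (hZ2 _ hy₀Z) <|
      LinearMap.apply_pow_sub_one_apply_ne_zero hnd he hcompl.sup_eq_top hWsing hWinv hx₀W
        (hW2 _ hx₀W) hx₀ (Module.End.le_span_range_pow_apply hZinv hy₀Z β hβ)

/-- Lemma: for nilpotent `e ∈ sp(V)` with `V ↓ K[e] = W(ℓ)` (i.e. `V = W ⊕ Z` with `W`, `Z`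
totally singular `e`-invariant, `e` a single Jordan block of size `ℓ` on each), with
`α = ν₂(ℓ)`: `ker(ẽ^(2^α - 1)) ⊆ ker φ` and `ker(ẽ^(2^α)) ⊄ ker φ`. -/
theorem stmt13 (K : Type*) [Field K] [IsAlgClosed K] [CharP K 2]
    (V : Type*) [AddCommGroup V] [Module K V] [FiniteDimensional K V]
    (ℓ : ℕ) (hl : 1 ≤ ℓ) (hdim : Module.finrank K V = 2 * ℓ)
    (b : V →ₗ[K] V →ₗ[K] K)
    (halt : ∀ v : V, b v v = 0)
    (hnd : ∀ v : V, (∀ w : V, b v w = 0) → v = 0)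
    (e : Module.End K V)
    (hsp : ∀ v w : V, b (e v) w + b v (e w) = 0)
    (hnil : IsNilpotent e)
    (W Z : Submodule K V) (hcompl : IsCompl W Z)
    (hWsing : ∀ x ∈ W, ∀ y ∈ W, b x y = 0)
    (hZsing : ∀ x ∈ Z, ∀ y ∈ Z, b x y = 0)
    (hWinv : ∀ x ∈ W, e x ∈ W) (hZinv : ∀ x ∈ Z, e x ∈ Z)
    (hWdim : Module.finrank K ↥W = ℓ) (hZdim : Module.finrank K ↥Z = ℓ)
    (hW1 : ∃ x ∈ W, (e ^ (ℓ - 1)) x ≠ 0)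
    (hW2 : ∀ x ∈ W, (e ^ ℓ) x = 0)
    (hZ1 : ∃ x ∈ Z, (e ^ (ℓ - 1)) x ≠ 0)
    (hZ2 : ∀ x ∈ Z, (e ^ ℓ) x = 0)
    (et : Module.End K (SymSq K V))
    (het : ∀ x y : V, et (SymSq.mul x y) = SymSq.mul (e x) y + SymSq.mul x (e y))
    (φ : SymSq K V →ₗ[K] K)
    (hφ : ∀ x y : V, φ (SymSq.mul x y) = b x y) :
    LinearMap.ker (et ^ (2 ^ padicValNat 2 ℓ - 1)) ≤ LinearMap.ker φ ∧
      ¬ LinearMap.ker (et ^ (2 ^ padicValNat 2 ℓ)) ≤ LinearMap.ker φ :=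
  stmt13_general K V ℓ hl b halt hnd e hsp W Z hcompl hWsing hZsing hWinv hZinv hZdim hW1 hW2 hZ1
    hZ2 et het φ hφ
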